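/- Let G be a finite connected graph, b>a>0, K > 2λ((a+b)(b−a)+2a²), and suppose sequences (u_n), (v_n) are defined by u₁ = −u₀, v₁ = −v₀ and the iteration (Δ−K)u_{n+1} = λf₁(u_n+u₀, v_n+v₀) − Ku_n + 4πN₁/|V|, (Δ−K)v_{n+1} = λf₂(u_n+u₀, v_n+v₀) − Kv_n + 4πN₂/|V|. Then u_{n+1} < u_n and v_{n+1} < v_n on V for all n ≥ 1. -/
import Mathlib
open Real

noncomputable def graphLap {V : Type*} [Fintype V] (w : V → V → ℝ) (μ : V → ℝ)
    (u : V → ℝ) (x : V) : ℝ :=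
  (μ x)⁻¹ * ∑ y, w x y * (u y - u x)

def graphConnected {V : Type*} (w : V → V → ℝ) : Prop :=
  ∀ x y : V, Relation.ReflTransGen (fun a b => 0 < w a b) x y

noncomputable def dirac {V : Type*} [DecidableEq V] (μ : V → ℝ) (p x : V) : ℝ :=
  if x = p then (μ x)⁻¹ else 0

noncomputable def f₁ (a b u v : ℝ) : ℝ :=
  a * (b - a) * exp u - b * (b - a) * exp v + a ^ 2 * exp (2 * u)
    - a * b * exp (2 * v) + b * (b - a) * exp (u + v)

noncomputable def f₂ (a b u v : ℝ) : ℝ :=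
  -(b * (b - a) * exp u) + a * (b - a) * exp v - a * b * exp (2 * u)
    + a ^ 2 * exp (2 * v) + b * (b - a) * exp (u + v)

lemma graphLap_sub' {V : Type*} [Fintype V] (w : V → V → ℝ) (μ : V → ℝ) (f g : V → ℝ) (x : V) :
    graphLap w μ (fun y => f y - g y) x = graphLap w μ f x - graphLap w μ g x := by
  simp only [graphLap]
  rw [← mul_sub, ← Finset.sum_sub_distrib]
  congr 1
  exact Finset.sum_congr rfl fun y _ => by ring

lemma graphLap_neg' {V : Type*} [Fintype V] (w : V → V → ℝ) (μ : V → ℝ) (g : V → ℝ) (x : V) :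
    graphLap w μ (fun y => -(g y)) x = -graphLap w μ g x := by
  simp only [graphLap]
  rw [← mul_neg, ← Finset.sum_neg_distrib]
  congr 1
  exact Finset.sum_congr rfl fun y _ => by ring

lemma lap_nonpos_at_max {V : Type*} [Fintype V] (w : V → V → ℝ) (μ : V → ℝ) (hwnn : ∀ x y, 0 ≤ w x y)
    (hμ : ∀ x, 0 < μ x) (h : V → ℝ) (x₀ : V) (hx₀ : ∀ x, h x ≤ h x₀) :
    graphLap w μ h x₀ ≤ 0 := by
  have hs : ∑ y, w x₀ y * (h y - h x₀) ≤ 0 :=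
    Finset.sum_nonpos fun y _ => by nlinarith [hwnn x₀ y, hx₀ y]
  have hi : (0:ℝ) ≤ (μ x₀)⁻¹ := inv_nonneg.mpr (hμ x₀).le
  unfold graphLap
  nlinarith

lemma exp_sub_exp_le {s t : ℝ} (hst : s ≤ t) (ht : t ≤ 0) : exp t - exp s ≤ t - s := by
  have h1 : 1 + (s - t) ≤ exp (s - t) := by linarith [add_one_le_exp (s - t)]
  have h2 : exp t ≤ 1 := by rw [← Real.exp_zero]; exact exp_le_exp.mpr ht
  have h3 : exp s = exp t * exp (s - t) := by rw [← exp_add]; ring_nf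
  have h4 : exp t * (1 - exp (s-t)) ≤ exp t * (t - s) :=
    mul_le_mul_of_nonneg_left (by linarith) (exp_pos t).le
  have h5 : exp t * (t - s) ≤ 1 * (t - s) := mul_le_mul_of_nonneg_right h2 (by linarith)
  nlinarith

lemma strictMP {V : Type*} [Fintype V] [Nonempty V] (w : V → V → ℝ) (μ : V → ℝ)
    (hwnn : ∀ x y, 0 ≤ w x y) (hμ : ∀ x, 0 < μ x) (K : ℝ) (hK : 0 < K) (h : V → ℝ)
    (hyp : ∀ x, 0 < graphLap w μ h x - K * h x) : ∀ x, h x < 0 := by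
  obtain ⟨x₀, hx₀⟩ := Finite.exists_max h
  have h1 := lap_nonpos_at_max w μ hwnn hμ h x₀ hx₀
  have h2 := hyp x₀
  have hx0neg : h x₀ < 0 := by
    by_contra h'
    push_neg at h'
    nlinarith [mul_nonneg hK.le h']
  exact fun x => lt_of_le_of_lt (hx₀ x) hx0neg

lemma weakMP {V : Type*} [Fintype V] [Nonempty V] (w : V → V → ℝ) (μ : V → ℝ)
    (hwnn : ∀ x y, 0 ≤ w x y) (hμ : ∀ x, 0 < μ x) (hconn : graphConnected w)
    (K : ℝ) (hK : 0 < K) (h : V → ℝ)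
    (hyp : ∀ x, 0 ≤ graphLap w μ h x - K * h x)
    (xs : V) (hstar : 0 < graphLap w μ h xs - K * h xs) :
    ∀ x, h x < 0 := by
  obtain ⟨x₀, hx₀⟩ := Finite.exists_max h
  have hmax0 : h x₀ ≤ 0 := by
    have h1 := lap_nonpos_at_max w μ hwnn hμ h x₀ hx₀
    have h2 := hyp x₀
    nlinarith
  rcases lt_or_eq_of_le hmax0 with hlt | heq
  · exact fun x => lt_of_le_of_lt (hx₀ x) hlt
  · exfalso
    have hprop : ∀ z, Relation.ReflTransGen (fun a c => 0 < w a c) x₀ z → h z = 0 := by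
      intro z hz
      induction hz with
      | refl => exact heq
      | @tail b c hab hbc ih =>
        have hbmax : ∀ x, h x ≤ h b := fun x => by rw [ih, ← heq]; exact hx₀ x
        have hlap_le : graphLap w μ h b ≤ 0 := lap_nonpos_at_max w μ hwnn hμ h b hbmax
        have hlap_ge : 0 ≤ graphLap w μ h b := by
          have h2 := hyp b; rw [ih] at h2; nlinarith
        have hlap0 : graphLap w μ h b = 0 := le_antisymm hlap_le hlap_ge
        have hsum0 : ∑ y, w b y * (h y - h b) = 0 := by
          have hne : (μ b)⁻¹ ≠ 0 := inv_ne_zero (hμ b).ne'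
          unfold graphLap at hlap0
          exact (mul_eq_zero.mp hlap0).resolve_left hne
        have hterm : w b c * (h c - h b) = 0 :=
          (Finset.sum_eq_zero_iff_of_nonpos
            (fun y _ => by nlinarith [hwnn b y, hbmax y])).mp hsum0 c (Finset.mem_univ c)
        rcases mul_eq_zero.mp hterm with h1 | h1
        · exact absurd h1 hbc.ne'
        · linarith [ih]
    have hzs : h xs = 0 := hprop xs (hconn x₀ xs)
    have hle : graphLap w μ h xs ≤ 0 :=
      lap_nonpos_at_max w μ hwnn hμ h xs (fun x => by rw [hzs, ← heq]; exact hx₀ x)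
    rw [hzs] at hstar
    nlinarith

lemma f1_zero (a b : ℝ) : f₁ a b 0 0 = 0 := by simp [f₁]; ring

lemma f2_eq (a b x y : ℝ) : f₂ a b x y = f₁ a b y x := by
  unfold f₁ f₂; rw [add_comm y x]; ring

lemma f2_zero (a b : ℝ) : f₂ a b 0 0 = 0 := by rw [f2_eq]; exact f1_zero a b

lemma f1_diff_le {a b U U' V V' : ℝ} (ha : 0 < a) (hab : a < b)
    (hU : U ≤ U') (hU0 : U' ≤ 0) (hV : V ≤ V') (hV0 : V' ≤ 0) :
    f₁ a b U' V' - f₁ a b U V ≤ ((a+b)*(b-a) + 2*a^2) * (U' - U) := by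
  have e1 : exp U' - exp U ≤ U' - U := exp_sub_exp_le hU hU0
  have e2 : exp (2*U') - exp (2*U) ≤ 2*U' - 2*U := by
    have := exp_sub_exp_le (s := 2*U) (t := 2*U') (by linarith) (by linarith)
    linarith
  have e3 : exp V ≤ exp V' := exp_le_exp.mpr hV
  have e4 : exp (2*V) ≤ exp (2*V') := exp_le_exp.mpr (by linarith)
  have e5' : exp U ≤ 1 := by rw [← Real.exp_zero]; exact exp_le_exp.mpr (hU.trans hU0)
  have e6 : exp V' ≤ 1 := by rw [← Real.exp_zero]; exact exp_le_exp.mpr hV0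
  have h1 : exp (U'+V') - exp (U+V') = exp V' * (exp U' - exp U) := by
    rw [exp_add, exp_add]; ring
  have h2 : exp (U+V') - exp (U+V) = exp U * (exp V' - exp V) := by
    rw [exp_add, exp_add]; ring
  have e7 : exp (U'+V') - exp (U+V) ≤ (U' - U) + (exp V' - exp V) := by
    have c1 : exp V' * (exp U' - exp U) ≤ 1 * (U' - U) := by
      have hd : 0 ≤ exp U' - exp U := by
        have := exp_le_exp.mpr hU; linarith
      calc exp V' * (exp U' - exp U) ≤ 1 * (exp U' - exp U) :=
        mul_le_mul_of_nonneg_right e6 hd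
      _ ≤ 1 * (U' - U) := by linarith
    have c2 : exp U * (exp V' - exp V) ≤ 1 * (exp V' - exp V) :=
      mul_le_mul_of_nonneg_right e5' (by linarith)
    linarith
  have c1 : a*(b-a)*(exp U' - exp U) ≤ a*(b-a)*(U'-U) :=
    mul_le_mul_of_nonneg_left e1 (by nlinarith)
  have c2 : a^2*(exp (2*U') - exp (2*U)) ≤ a^2*(2*U' - 2*U) :=
    mul_le_mul_of_nonneg_left e2 (by positivity)
  have c3 : b*(b-a)*(exp (U'+V') - exp (U+V)) ≤ b*(b-a)*((U' - U) + (exp V' - exp V)) :=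
    mul_le_mul_of_nonneg_left e7 (by nlinarith)
  have c4 : 0 ≤ b*(b-a)*(exp V' - exp V) := mul_nonneg (by nlinarith) (by linarith)
  have c5 : 0 ≤ a*b*(exp (2*V') - exp (2*V)) := mul_nonneg (by nlinarith) (by linarith)
  unfold f₁
  nlinarith [c1, c2, c3, c4, c5]

lemma f2_diff_le {a b U U' V V' : ℝ} (ha : 0 < a) (hab : a < b)
    (hU : U ≤ U') (hU0 : U' ≤ 0) (hV : V ≤ V') (hV0 : V' ≤ 0) :
    f₂ a b U' V' - f₂ a b U V ≤ ((a+b)*(b-a) + 2*a^2) * (V' - V) := by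
  rw [f2_eq, f2_eq]
  exact f1_diff_le ha hab hV hV0 hU hU0

lemma dirac_nonneg {V : Type*} [DecidableEq V] (μ : V → ℝ) (hμ : ∀ x, 0 < μ x) (p x : V) :
    0 ≤ dirac μ p x := by
  unfold dirac
  split
  · exact (inv_nonneg.mpr (hμ x).le)
  · exact le_rfl

/-- The iteration scheme produces strictly decreasing sequences. -/
theorem stmt_14 {V : Type*} [Fintype V] [Nonempty V] [DecidableEq V]
    (w : V → V → ℝ) (μ : V → ℝ)
    (hsymm : ∀ x y, w x y = w y x) (hwnn : ∀ x y, 0 ≤ w x y)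
    (hμ : ∀ x, 0 < μ x) (hconn : graphConnected w)
    (a b lam K : ℝ) (ha : 0 < a) (hab : a < b) (hlam : 0 < lam)
    (hK : K > 2 * lam * ((a + b) * (b - a) + 2 * a ^ 2))
    (k₁ k₂ : ℕ) (hk₁ : 0 < k₁) (hk₂ : 0 < k₂)
    (p : Fin k₁ → V) (q : Fin k₂ → V)
    (m : Fin k₁ → ℝ) (n : Fin k₂ → ℝ)
    (hm : ∀ j, 0 < m j) (hn : ∀ j, 0 < n j)
    (u₀ v₀ : V → ℝ)
    (hu₀ : ∀ x, graphLap w μ u₀ x =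
      -(4 * π * (∑ j, m j)) / (∑ y, μ y) + 4 * π * ∑ j, m j * dirac μ (p j) x)
    (hv₀ : ∀ x, graphLap w μ v₀ x =
      -(4 * π * (∑ j, n j)) / (∑ y, μ y) + 4 * π * ∑ j, n j * dirac μ (q j) x)
    (u v : ℕ → V → ℝ)
    (hinit : u 1 = -u₀ ∧ v 1 = -v₀)
    (hiter₁ : ∀ n' ≥ 1, ∀ x, graphLap w μ (u (n' + 1)) x - K * u (n' + 1) x =
      lam * f₁ a b (u n' x + u₀ x) (v n' x + v₀ x) - K * u n' x
        + 4 * π * (∑ j, m j) / (∑ y, μ y))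
    (hiter₂ : ∀ n' ≥ 1, ∀ x, graphLap w μ (v (n' + 1)) x - K * v (n' + 1) x =
      lam * f₂ a b (u n' x + u₀ x) (v n' x + v₀ x) - K * v n' x
        + 4 * π * (∑ j, n j) / (∑ y, μ y)) :
    ∀ n' ≥ 1, ∀ x, u (n' + 1) x < u n' x ∧ v (n' + 1) x < v n' x := by
  obtain ⟨hu1, hv1⟩ := hinit
  have hu1f : ∀ y, u 1 y = -u₀ y := fun y => by rw [hu1]; rfl
  have hv1f : ∀ y, v 1 y = -v₀ y := fun y => by rw [hv1]; rfl
  have hπ : (0:ℝ) < π := Real.pi_pos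
  have hMpos : 0 < (a+b)*(b-a) + 2*a^2 := by nlinarith
  have hKM : lam * ((a+b)*(b-a) + 2*a^2) < K := by nlinarith
  have hKpos : 0 < K := lt_trans (by positivity) hKM
  suffices H : ∀ n' : ℕ, 1 ≤ n' →
      ((∀ x, u (n'+1) x < u n' x ∧ v (n'+1) x < v n' x) ∧
       (∀ x, u n' x + u₀ x ≤ 0 ∧ v n' x + v₀ x ≤ 0)) by
    intro n' hn' x
    exact (H n' hn').1 x
  refine Nat.le_induction ?_ ?_
  · -- Base case n' = 1
    have hUlap : ∀ x, graphLap w μ (fun y => u (1+1) y - u 1 y) x - K * (u (1+1) x - u 1 x)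
        = 4 * π * ∑ j, m j * dirac μ (p j) x := by
      intro x
      rw [graphLap_sub']
      have e1 := hiter₁ 1 le_rfl x
      rw [show u 1 x + u₀ x = 0 by rw [hu1f]; ring,
          show v 1 x + v₀ x = 0 by rw [hv1f]; ring, f1_zero a b] at e1
      have e2 : graphLap w μ (u 1) x = -graphLap w μ u₀ x := by
        rw [show u 1 = fun y => -(u₀ y) from funext hu1f]
        exact graphLap_neg' w μ u₀ x
      rw [e2, hu1f x]
      linear_combination e1 + hu₀ x - K * hu1f x
    have hVlap : ∀ x, graphLap w μ (fun y => v (1+1) y - v 1 y) x - K * (v (1+1) x - v 1 x)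
        = 4 * π * ∑ j, n j * dirac μ (q j) x := by
      intro x
      rw [graphLap_sub']
      have e1 := hiter₂ 1 le_rfl x
      rw [show u 1 x + u₀ x = 0 by rw [hu1f]; ring,
          show v 1 x + v₀ x = 0 by rw [hv1f]; ring, f2_zero a b] at e1
      have e2 : graphLap w μ (v 1) x = -graphLap w μ v₀ x := by
        rw [show v 1 = fun y => -(v₀ y) from funext hv1f]
        exact graphLap_neg' w μ v₀ x
      rw [e2, hv1f x]
      linear_combination e1 + hv₀ x - K * hv1f x
    have hUdec : ∀ x, u (1+1) x < u 1 x := by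
      have hneg := weakMP w μ hwnn hμ hconn K hKpos (fun y => u (1+1) y - u 1 y)
        (fun x => by
          show (0:ℝ) ≤ graphLap w μ (fun y => u (1+1) y - u 1 y) x - K * (u (1+1) x - u 1 x)
          rw [hUlap x]
          exact mul_nonneg (by positivity)
            (Finset.sum_nonneg fun j _ => mul_nonneg (hm j).le (dirac_nonneg μ hμ _ _)))
        (p ⟨0, hk₁⟩)
        (by
          show (0:ℝ) < graphLap w μ (fun y => u (1+1) y - u 1 y) (p ⟨0, hk₁⟩)
            - K * (u (1+1) (p ⟨0, hk₁⟩) - u 1 (p ⟨0, hk₁⟩))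
          rw [hUlap _]
          refine mul_pos (by positivity) ?_
          refine Finset.sum_pos' (fun j _ => mul_nonneg (hm j).le (dirac_nonneg μ hμ _ _))
            ⟨⟨0, hk₁⟩, Finset.mem_univ _, ?_⟩
          have hd : dirac μ (p ⟨0, hk₁⟩) (p ⟨0, hk₁⟩) = (μ (p ⟨0, hk₁⟩))⁻¹ := by
            simp [dirac]
          rw [hd]
          exact mul_pos (hm _) (inv_pos.mpr (hμ _)))
      intro x
      have := hneg x
      exact sub_neg.mp this
    have hVdec : ∀ x, v (1+1) x < v 1 x := by
      have hneg := weakMP w μ hwnn hμ hconn K hKpos (fun y => v (1+1) y - v 1 y)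
        (fun x => by
          show (0:ℝ) ≤ graphLap w μ (fun y => v (1+1) y - v 1 y) x - K * (v (1+1) x - v 1 x)
          rw [hVlap x]
          exact mul_nonneg (by positivity)
            (Finset.sum_nonneg fun j _ => mul_nonneg (hn j).le (dirac_nonneg μ hμ _ _)))
        (q ⟨0, hk₂⟩)
        (by
          show (0:ℝ) < graphLap w μ (fun y => v (1+1) y - v 1 y) (q ⟨0, hk₂⟩)
            - K * (v (1+1) (q ⟨0, hk₂⟩) - v 1 (q ⟨0, hk₂⟩))
          rw [hVlap _]
          refine mul_pos (by positivity) ?_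
          refine Finset.sum_pos' (fun j _ => mul_nonneg (hn j).le (dirac_nonneg μ hμ _ _))
            ⟨⟨0, hk₂⟩, Finset.mem_univ _, ?_⟩
          have hd : dirac μ (q ⟨0, hk₂⟩) (q ⟨0, hk₂⟩) = (μ (q ⟨0, hk₂⟩))⁻¹ := by
            simp [dirac]
          rw [hd]
          exact mul_pos (hn _) (inv_pos.mpr (hμ _)))
      intro x
      have := hneg x
      exact sub_neg.mp this
    refine ⟨fun x => ⟨hUdec x, hVdec x⟩, fun x => ⟨?_, ?_⟩⟩
    · rw [hu1f x]; linarith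
    · rw [hv1f x]; linarith
  · -- Inductive step
    intro N hN ih
    obtain ⟨ihdec, ihbd⟩ := ih
    have hUdec : ∀ x, u (N+1+1) x < u (N+1) x := by
      have hneg := strictMP w μ hwnn hμ K hKpos (fun y => u (N+1+1) y - u (N+1) y)
        (fun x => by
          show (0:ℝ) < graphLap w μ (fun y => u (N+1+1) y - u (N+1) y) x
            - K * (u (N+1+1) x - u (N+1) x)
          rw [graphLap_sub']
          have e1 := hiter₁ (N+1) (by omega) x
          have e2 := hiter₁ N hN x
          have hUU' : u (N+1) x + u₀ x < u N x + u₀ x := by linarith [(ihdec x).1]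
          have hVV' : v (N+1) x + v₀ x < v N x + v₀ x := by linarith [(ihdec x).2]
          have hU'0 : u N x + u₀ x ≤ 0 := (ihbd x).1
          have hV'0 : v N x + v₀ x ≤ 0 := (ihbd x).2
          have hest := f1_diff_le ha hab hUU'.le hU'0 hVV'.le hV'0
          have hlin : lam * (f₁ a b (u N x + u₀ x) (v N x + v₀ x)
              - f₁ a b (u (N+1) x + u₀ x) (v (N+1) x + v₀ x))
              ≤ lam * (((a+b)*(b-a)+2*a^2) * ((u N x + u₀ x) - (u (N+1) x + u₀ x))) :=
            mul_le_mul_of_nonneg_left hest hlam.le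
          nlinarith [mul_pos (sub_pos.mpr hKM) (sub_pos.mpr hUU')])
      intro x
      exact sub_neg.mp (hneg x)
    have hVdec : ∀ x, v (N+1+1) x < v (N+1) x := by
      have hneg := strictMP w μ hwnn hμ K hKpos (fun y => v (N+1+1) y - v (N+1) y)
        (fun x => by
          show (0:ℝ) < graphLap w μ (fun y => v (N+1+1) y - v (N+1) y) x
            - K * (v (N+1+1) x - v (N+1) x)
          rw [graphLap_sub']
          have e1 := hiter₂ (N+1) (by omega) x
          have e2 := hiter₂ N hN x
          have hUU' : u (N+1) x + u₀ x < u N x + u₀ x := by linarith [(ihdec x).1]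
          have hVV' : v (N+1) x + v₀ x < v N x + v₀ x := by linarith [(ihdec x).2]
          have hU'0 : u N x + u₀ x ≤ 0 := (ihbd x).1
          have hV'0 : v N x + v₀ x ≤ 0 := (ihbd x).2
          have hest := f2_diff_le ha hab hUU'.le hU'0 hVV'.le hV'0
          have hlin : lam * (f₂ a b (u N x + u₀ x) (v N x + v₀ x)
              - f₂ a b (u (N+1) x + u₀ x) (v (N+1) x + v₀ x))
              ≤ lam * (((a+b)*(b-a)+2*a^2) * ((v N x + v₀ x) - (v (N+1) x + v₀ x))) :=
            mul_le_mul_of_nonneg_left hest hlam.le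
          nlinarith [mul_pos (sub_pos.mpr hKM) (sub_pos.mpr hVV')])
      intro x
      exact sub_neg.mp (hneg x)
    refine ⟨fun x => ⟨hUdec x, hVdec x⟩, fun x => ⟨?_, ?_⟩⟩
    · linarith [(ihdec x).1, (ihbd x).1]
    · linarith [(ihdec x).2, (ihbd x).2]
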